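/- Let a, b be real numbers, and let M be the 3×3 real matrix whose rows are (1+a, 1+a, 1+a), (1−b, 1−b, 1−b), (b−a, b−a, b−a). If (1+a)(1−b)(b−a) ≠ 0, (1+a)(1−b)(2+a−b) < 0 and (b−a)(2+a−b) < 0, then the evolution algebra E_M is isomorphic to the evolution algebra E₉ whose structure matrix has rows (1,0,0), (−1,0,0), (−1,0,0). -/

import Mathlib

/-- Evolution algebra multiplication on ℝ³ determined by a structure matrix `A`:
`(x ∗_A y) j = ∑ i, x i * y i * A i j`. -/
def evolMul (A : Matrix (Fin 3) (Fin 3) ℝ) (x y : Fin 3 → ℝ) : Fin 3 → ℝ :=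
  fun j => ∑ i, x i * y i * A i j

/-- The evolution algebras with structure matrices `A` and `B` are isomorphic:
there is an ℝ-linear equivalence of ℝ³ intertwining the two multiplications. -/
def EvolIso (A B : Matrix (Fin 3) (Fin 3) ℝ) : Prop :=
  ∃ f : (Fin 3 → ℝ) ≃ₗ[ℝ] (Fin 3 → ℝ),
    ∀ x y, f (evolMul A x y) = evolMul B (f x) (f y)

/-!
Both structure matrices have rank one: `M = vecMulVec c 1` with `c = (1 + a, 1 - b, b - a)`, and
`E₉ = vecMulVec (1, -1, -1) e₀`. For `A = vecMulVec c v` one has `x ∗ y = (∑ cᵢ xᵢ yᵢ) • v`, so a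
matrix `P` with `Pᵀ diag(1, -1, -1) P = μ diag c` and `P v = μ w` is an isomorphism of
`E_{vecMulVec c v}` onto `E_{vecMulVec (1, -1, -1) w}`. Such a `P` with `v = 1`, `w = e₀` and
`μ = ∑ cᵢ` exists when `diag c` has the signature `(1, 2)` of the Minkowski form, and the
hypotheses on `a` and `b` force this.
-/

open Matrix

theorem evolMul_vecMulVec (c v x y : Fin 3 → ℝ) :
    evolMul (vecMulVec c v) x y = (x ⬝ᵥ (diagonal c *ᵥ y)) • v := by
  ext j
  simp only [evolMul, vecMulVec_apply, mulVec_diagonal, dotProduct, Pi.smul_apply, smul_eq_mul,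
    Finset.sum_mul]
  congr! 1 with i
  ring

theorem mulVec_dotProduct_mulVec_mulVec {n R : Type*} [Fintype n] [CommSemiring R]
    (P M : Matrix n n R) (x y : n → R) :
    (P *ᵥ x) ⬝ᵥ (M *ᵥ (P *ᵥ y)) = x ⬝ᵥ ((Pᵀ * M * P) *ᵥ y) := by
  rw [← vecMul_transpose, ← dotProduct_mulVec, mulVec_mulVec, mulVec_mulVec]

theorem isUnit_det_of_transpose_mul_diagonal_mul_eq {n K : Type*} [Fintype n] [DecidableEq n]
    [Field K] {P : Matrix n n K} {c d : n → K} {μ : K}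
    (hP : Pᵀ * diagonal d * P = μ • diagonal c) (hμ : μ ≠ 0) (hc : ∏ i, c i ≠ 0) :
    IsUnit P.det := by
  have h := congrArg det hP
  simp only [det_mul, det_transpose, det_smul, det_diagonal] at h
  refine isUnit_iff_ne_zero.mpr fun h0 => ?_
  rw [h0, zero_mul, mul_zero] at h
  exact mul_ne_zero (pow_ne_zero _ hμ) hc h.symm

theorem evolIso_vecMulVec_of_transpose_mul_diagonal_mul_eq {P : Matrix (Fin 3) (Fin 3) ℝ}
    {c d v w : Fin 3 → ℝ} {μ : ℝ} (hP : Pᵀ * diagonal d * P = μ • diagonal c)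
    (hv : P *ᵥ v = μ • w) (hμ : μ ≠ 0) (hc : ∏ i, c i ≠ 0) :
    EvolIso (vecMulVec c v) (vecMulVec d w) := by
  have : Invertible P :=
    P.invertibleOfIsUnitDet (isUnit_det_of_transpose_mul_diagonal_mul_eq hP hμ hc)
  refine ⟨P.toLinearEquiv' this, fun x y => ?_⟩
  change P *ᵥ _ = evolMul _ (P *ᵥ x) (P *ᵥ y)
  rw [evolMul_vecMulVec, evolMul_vecMulVec, mulVec_smul, hv, mulVec_dotProduct_mulVec_mulVec, hP,
    smul_mulVec, dotProduct_smul, smul_smul, smul_eq_mul, mul_comm]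

theorem exists_transpose_mul_minkowski_mul_eq (c : Fin 3 → ℝ) {μ : ℝ} (hμ : c 0 + c 1 + c 2 = μ)
    (hσ : c 0 * (c 1 + c 2) < 0) (hτ : 0 < μ * (c 0 * c 1 * c 2)) :
    ∃ P : Matrix (Fin 3) (Fin 3) ℝ,
      Pᵀ * diagonal ![1, -1, -1] * P = μ • diagonal c ∧ P *ᵥ 1 = μ • Pi.single 0 1 := by
  obtain ⟨σ, hσ0, hσ2⟩ : ∃ σ : ℝ, σ ≠ 0 ∧ σ ^ 2 = -(c 0 * (c 1 + c 2)) :=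
    ⟨_, (Real.sqrt_pos.mpr (neg_pos.mpr hσ)).ne', Real.sq_sqrt (neg_pos.mpr hσ).le⟩
  obtain ⟨τ, hτ2⟩ : ∃ τ : ℝ, τ ^ 2 = μ * (c 0 * c 1 * c 2) := ⟨_, Real.sq_sqrt hτ.le⟩
  subst hμ
  -- The columns are orthogonal for `diag(1, -1, -1)`, the `i`-th of square `μ cᵢ`, and sum to `μ e₀`.
  refine ⟨!![c 0, c 1, c 2; σ, c 0 * c 1 / σ, c 0 * c 2 / σ; 0, τ / σ, -(τ / σ)], ?_, ?_⟩
  · ext i j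
    fin_cases i <;> fin_cases j <;> simp [mul_apply, Fin.sum_univ_three, diagonal_apply] <;> grind
  · ext i
    fin_cases i <;> simp [mulVec, dotProduct, Fin.sum_univ_three]
    grind

theorem evolIso_vecMulVec_one_minkowski (c : Fin 3 → ℝ) (hσ : c 0 * (c 1 + c 2) < 0)
    (hτ : 0 < (c 0 + c 1 + c 2) * (c 0 * c 1 * c 2)) :
    EvolIso (vecMulVec c 1) (vecMulVec ![1, -1, -1] (Pi.single 0 1)) := by
  obtain ⟨P, hP, hv⟩ := exists_transpose_mul_minkowski_mul_eq c rfl hσ hτ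
  obtain ⟨hμ, hc⟩ := mul_ne_zero_iff.mp hτ.ne'
  exact evolIso_vecMulVec_of_transpose_mul_diagonal_mul_eq hP hv hμ
    (by rwa [Fin.prod_univ_three])

theorem stmt_general (a b : ℝ)
    (h2 : (1 + a) * (1 - b) * (2 + a - b) < 0)
    (h3 : (b - a) * (2 + a - b) < 0) :
    EvolIso (!![1 + a, 1 + a, 1 + a; 1 - b, 1 - b, 1 - b; b - a, b - a, b - a] : Matrix (Fin 3) (Fin 3) ℝ) (!![1, 0, 0; -1, 0, 0; -1, 0, 0] : Matrix (Fin 3) (Fin 3) ℝ) := by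
  have hσ : (1 + a) * ((1 - b) + (b - a)) < 0 := by
    rcases lt_or_gt_of_ne (right_ne_zero_of_mul h3.ne) with hs | hs
    · have h01 : 0 < (1 + a) * (1 - b) := pos_of_mul_neg_left h2 hs.le
      have ha : 1 + a < 0 := by nlinarith
      nlinarith
    · have h01 : (1 + a) * (1 - b) < 0 := neg_of_mul_neg_left h2 hs.le
      have hba : b - a < 0 := neg_of_mul_neg_left h3 hs.le
      nlinarith [sq_nonneg (1 + a)]
  have hτ : 0 < ((1 + a) + (1 - b) + (b - a)) * ((1 + a) * (1 - b) * (b - a)) := by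
    nlinarith [mul_pos_of_neg_of_neg h2 h3, sq_nonneg (2 + a - b)]
  convert evolIso_vecMulVec_one_minkowski ![1 + a, 1 - b, b - a] hσ hτ using 1 <;>
    ext i j <;> fin_cases i <;> fin_cases j <;> simp [vecMulVec]

theorem stmt (a b : ℝ)
    (h1 : (1 + a) * (1 - b) * (b - a) ≠ 0)
    (h2 : (1 + a) * (1 - b) * (2 + a - b) < 0)
    (h3 : (b - a) * (2 + a - b) < 0) :
    EvolIso (!![1 + a, 1 + a, 1 + a; 1 - b, 1 - b, 1 - b; b - a, b - a, b - a] : Matrix (Fin 3) (Fin 3) ℝ) (!![1, 0, 0; -1, 0, 0; -1, 0, 0] : Matrix (Fin 3) (Fin 3) ℝ) :=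
  stmt_general a b h2 h3
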